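/- For noise distribution F(x) = Φ(x/σ) with σ > 0, if two parameter triples (A, c, σ) and (Â, ĉ, σ̂) induce the same transition matrix of the binary observation model, then c_i/σ = ĉ_i/σ̂ and a_{ij}/σ = â_{ij}/σ̂ for all i, j; i.e., the model is identifiable up to a common positive scaling of each (A_i, c_i) by the noise standard deviation. -/

import Mathlib

/-
Write `p_i(u) = Φ(z_i(u))` with `z_i(u) = (c_i - A_i u) / σ`. The probability of the all-zero
output is `∏ p_i`, and that of the output with a single one at `i` is
`(1 - p_i) ∏_{j ≠ i} p_j`; their sum is `∏_{j ≠ i} p_j > 0`, so the transition matrix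
determines every `p_i(u)`, hence every `z_i(u)` because `Φ` is injective. Taking `u = 0`
recovers `c_i / σ`, and `u = e_j` then recovers `a_ij / σ`.
-/

noncomputable def Phi (x : ℝ) : ℝ :=
  ∫ t in Set.Iic x, (Real.sqrt (2 * Real.pi))⁻¹ * Real.exp (-t ^ 2 / 2)

noncomputable def transS {n : ℕ} (A : Matrix (Fin n) (Fin n) ℝ) (c : Fin n → ℝ)
    (σ : ℝ) (u s : Fin n → Bool) : ℝ :=
  ∏ i, (if s i then 1 - Phi ((c i - ∑ j, A i j * (if u j then (1 : ℝ) else 0)) / σ)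
        else Phi ((c i - ∑ j, A i j * (if u j then (1 : ℝ) else 0)) / σ))

open MeasureTheory ProbabilityTheory Set Finset

theorem strictMono_setIntegral_Iic {f : ℝ → ℝ} (hf : Integrable f) (hpos : ∀ t, 0 < f t) :
    StrictMono fun x => ∫ t in Iic x, f t := by
  intro a b hab
  have hsplit : ∫ t in Iic b, f t = (∫ t in Iic a, f t) + ∫ t in Ioc a b, f t := by
    rw [← setIntegral_union (Iic_disjoint_Ioc le_rfl) measurableSet_Ioc hf.integrableOn
      hf.integrableOn, Iic_union_Ioc_eq_Iic hab.le]
  have hpos_Ioc : 0 < ∫ t in Ioc a b, f t := by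
    rw [← intervalIntegral.integral_of_le hab.le]
    exact intervalIntegral.intervalIntegral_pos_of_pos_on hf.intervalIntegrable
      (fun t _ => hpos t) hab
  simp only [hsplit]
  linarith

theorem Phi_eq_setIntegral_gaussianPDFReal (x : ℝ) :
    Phi x = ∫ t in Iic x, gaussianPDFReal 0 1 t := by
  simp [Phi, gaussianPDFReal]

theorem Phi_strictMono : StrictMono Phi := by
  simpa only [funext Phi_eq_setIntegral_gaussianPDFReal] using
    strictMono_setIntegral_Iic (integrable_gaussianPDFReal 0 1)
      (fun t => gaussianPDFReal_pos 0 1 t one_ne_zero)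

theorem Phi_pos (x : ℝ) : 0 < Phi x := by
  have hnonneg : 0 ≤ Phi (x - 1) := by
    rw [Phi_eq_setIntegral_gaussianPDFReal]
    exact setIntegral_nonneg measurableSet_Iic fun t _ => gaussianPDFReal_nonneg 0 1 t
  linarith [Phi_strictMono (sub_one_lt x)]

theorem eq_of_prod_bernoulli_eq {ι : Type*} [Fintype ι] [DecidableEq ι] {p q : ι → ℝ}
    (hp : ∀ i, p i ≠ 0)
    (h : ∀ s : ι → Bool,
      ∏ i, (if s i then 1 - p i else p i) = ∏ i, (if s i then 1 - q i else q i)) :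
    p = q := by
  funext i
  have hnone := h fun _ => false
  have hsingle := h fun j => decide (j = i)
  simp only [Bool.false_eq_true, if_false, decide_eq_true_eq] at hnone hsingle
  rw [← mul_prod_erase univ p (mem_univ i), ← mul_prod_erase univ q (mem_univ i)] at hnone
  rw [← mul_prod_erase univ _ (mem_univ i), ← mul_prod_erase univ _ (mem_univ i), if_pos rfl,
    if_pos rfl, prod_congr rfl fun j hj => if_neg (mem_erase.mp hj).1,
    prod_congr rfl fun j hj => if_neg (mem_erase.mp hj).1] at hsingle
  have hrest : ∏ j ∈ univ.erase i, p j = ∏ j ∈ univ.erase i, q j := by linarith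
  rw [hrest] at hnone
  exact mul_right_cancel₀ (hrest ▸ prod_ne_zero_iff.mpr fun j _ => hp j) hnone

section Threshold

variable {n : ℕ}

noncomputable def threshold (A : Matrix (Fin n) (Fin n) ℝ) (c : Fin n → ℝ) (σ : ℝ)
    (u : Fin n → Bool) (i : Fin n) : ℝ :=
  (c i - ∑ j, A i j * (if u j then (1 : ℝ) else 0)) / σ

theorem threshold_eq_of_transS_eq {A Ahat : Matrix (Fin n) (Fin n) ℝ} {c chat : Fin n → ℝ}
    {σ σhat : ℝ} (h : ∀ u s, transS A c σ u s = transS Ahat chat σhat u s) (u : Fin n → Bool) :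
    threshold A c σ u = threshold Ahat chat σhat u := by
  funext i
  exact Phi_strictMono.injective <|
    congrFun (eq_of_prod_bernoulli_eq (fun i => (Phi_pos _).ne') (h u)) i

theorem threshold_zero (A : Matrix (Fin n) (Fin n) ℝ) (c : Fin n → ℝ) (σ : ℝ) (i : Fin n) :
    threshold A c σ (fun _ => false) i = c i / σ := by
  simp [threshold]

theorem threshold_single (A : Matrix (Fin n) (Fin n) ℝ) (c : Fin n → ℝ) (σ : ℝ) (i j : Fin n) :
    threshold A c σ (fun k => decide (k = j)) i = c i / σ - A i j / σ := by
  simp [threshold, sub_div]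

end Threshold

theorem stmt9_general {n : ℕ}
    (A Ahat : Matrix (Fin n) (Fin n) ℝ) (c chat : Fin n → ℝ)
    (σ σhat : ℝ)
    (h : ∀ u s : Fin n → Bool, transS A c σ u s = transS Ahat chat σhat u s) :
    (∀ i, c i / σ = chat i / σhat) ∧ (∀ i j, A i j / σ = Ahat i j / σhat) := by
  have hc : ∀ i, c i / σ = chat i / σhat := fun i => by
    simpa only [threshold_zero] using congrFun (threshold_eq_of_transS_eq h fun _ => false) i
  refine ⟨hc, fun i j => ?_⟩
  have hA := congrFun (threshold_eq_of_transS_eq h fun k => decide (k = j)) i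
  rw [threshold_single, threshold_single, hc i] at hA
  linarith

theorem stmt9 {n : ℕ} (hn : 2 ≤ n)
    (A Ahat : Matrix (Fin n) (Fin n) ℝ) (c chat : Fin n → ℝ)
    (σ σhat : ℝ) (hσ : 0 < σ) (hσhat : 0 < σhat)
    (h : ∀ u s : Fin n → Bool, transS A c σ u s = transS Ahat chat σhat u s) :
    (∀ i, c i / σ = chat i / σhat) ∧ (∀ i j, A i j / σ = Ahat i j / σhat) :=
  stmt9_general A Ahat c chat σ σhat h
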